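/- In S = M₂(ℝ⁺), if I is a subtractive left ideal with E₁ ⊊ I, where E₁ = { [[a,0],[b,0]] : a, b ∈ ℝ⁺ }, then I = S. -/

import Mathlib

/-- The 2×2 matrix semiring over the nonnegative reals. -/
abbrev M2 : Type := Matrix (Fin 2) (Fin 2) NNReal

/-- A subset of the semiring is a left ideal. -/
def IsLeftIdeal (I : Set M2) : Prop :=
  0 ∈ I ∧ (∀ x ∈ I, ∀ y ∈ I, x + y ∈ I) ∧ ∀ s : M2, ∀ x ∈ I, s * x ∈ I

/-- A subset is subtractive: `s + x = y` with `x, y ∈ I` implies `s ∈ I`. -/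
def IsSubtractive (I : Set M2) : Prop :=
  ∀ s x y : M2, x ∈ I → y ∈ I → s + x = y → s ∈ I

/-- `E₁ = { [[a,0],[b,0]] : a, b ∈ ℝ⁺ }`. -/
def E1 : Set M2 := {A | A 0 1 = 0 ∧ A 1 1 = 0}

/-!
Write `eᵢⱼ = Matrix.single i j 1`. Every matrix splits as `M = M e₀₀ + (M e₁₀) e₀₁` with
`M e₀₀ ∈ E₁`, so a left ideal containing `E₁` and `e₀₁` is everything. A matrix `A ∈ I \ E₁`
has some entry `c = A j 1 ≠ 0`; then `B = (c⁻¹ e₀ⱼ) A ∈ I` has second row zero and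
`B = e₀₁ + B e₀₀` with `B e₀₀ ∈ E₁ ⊆ I`, so subtractivity gives `e₀₁ ∈ I`.
-/

open Matrix

theorem Matrix.mul_single_zero_add_mul_single_one {R : Type*} [Semiring R]
    (M : Matrix (Fin 2) (Fin 2) R) : M * single 0 0 1 + M * single 1 1 1 = M := by
  rw [← mul_add, ← Fin.sum_univ_two (fun i => single i i (1 : R)), sum_single_one, mul_one]

theorem mul_single_zero_zero_mem_E1 (M : M2) : M * single 0 0 1 ∈ E1 :=
  ⟨mul_single_apply_of_ne _ _ _ _ _ zero_ne_one.symm _,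
    mul_single_apply_of_ne _ _ _ _ _ zero_ne_one.symm _⟩

theorem exists_apply_one_ne_zero_of_notMem_E1 {A : M2} (hA : A ∉ E1) : ∃ j, A j 1 ≠ 0 := by
  by_contra! h
  exact hA ⟨h 0, h 1⟩

theorem IsLeftIdeal.eq_univ_of_single_zero_one_mem {I : Set M2} (hI : IsLeftIdeal I)
    (hE1 : E1 ⊆ I) (h01 : (single 0 1 1 : M2) ∈ I) : I = Set.univ := by
  refine Set.eq_univ_of_forall fun M => ?_
  have hsplit : M * single 0 0 1 + (M * single 1 0 1) * single 0 1 1 = M := by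
    rw [mul_assoc, single_mul_single_same, mul_one]
    exact M.mul_single_zero_add_mul_single_one
  rw [← hsplit]
  exact hI.2.1 _ (hE1 (mul_single_zero_zero_mem_E1 M)) _ (hI.2.2 _ _ h01)

theorem IsSubtractive.single_zero_one_mem {I : Set M2} (hSub : IsSubtractive I)
    (hI : IsLeftIdeal I) (hE1 : E1 ⊆ I) {A : M2} (hAI : A ∈ I) {j : Fin 2} (hA : A j 1 ≠ 0) :
    (single 0 1 1 : M2) ∈ I := by
  set B : M2 := single 0 j (A j 1)⁻¹ * A
  have hBI : B ∈ I := hI.2.2 _ _ hAI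
  have hB11 : B * single 1 1 1 = (single 0 1 1 : M2) := by
    rw [single_mul_mul_single, inv_mul_cancel₀ hA, one_mul]
  refine hSub _ (B * single 0 0 1) B (hE1 (mul_single_zero_zero_mem_E1 B)) hBI ?_
  rw [← hB11, add_comm]
  exact B.mul_single_zero_add_mul_single_one

/-- If `I` is a subtractive left ideal of `M₂(ℝ⁺)` with `E₁ ⊊ I`,
then `I = S`. -/
theorem stmt_9 (I : Set M2) (hI : IsLeftIdeal I) (hSub : IsSubtractive I)
    (hE1 : E1 ⊂ I) : I = Set.univ := by
  obtain ⟨A, hAI, hAE⟩ := Set.exists_of_ssubset hE1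
  obtain ⟨j, hA⟩ := exists_apply_one_ne_zero_of_notMem_E1 hAE
  exact hI.eq_univ_of_single_zero_one_mem hE1.subset
    (hSub.single_zero_one_mem hI hE1.subset hAI hA)
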